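/- arXiv:math/0402432 — 3 statements merged into one kernel-verified Lean document; each statement's English description precedes it below -/
import Mathlib

section
/- Let g be holomorphic on the unit disc with |g| < 1, and suppose |g| < η on the disc of radius 1/4, where 0 < η < 1. Then |g| ≤ √η on the disc of radius 1/2. -/
/-!
Hadamard's three-circles theorem: `w ↦ r₁ exp w` maps a vertical strip onto an annulus, so the
three-lines theorem makes `log ‖g‖` bounded by the affine interpolation in `log ‖z‖` of the bounds
on the two boundary circles. Since `1/2` is the geometric mean of `1/4` and `1`, the bounds `η` and
`1` interpolate to `√η`. The outer circle of radius `1` is reached as a limit of circles of radius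
`r < 1`, on which `g` is continuous.
-/

open Metric Complex.HadamardThreeLines

theorem ContinuousOn.norm_le_of_forall_mem_ball {F G : Type*} [NormedAddCommGroup F]
    [NormedSpace ℝ F] [SeminormedAddCommGroup G] {f : F → G} {x : F} {r a : ℝ}
    (hf : ContinuousOn f (closedBall x r)) (hr : r ≠ 0) (ha : ∀ y ∈ ball x r, ‖f y‖ ≤ a)
    {z : F} (hz : z ∈ closedBall x r) : ‖f z‖ ≤ a :=
  ContinuousWithinAt.closure_le (closure_ball x hr ▸ hz)
    ((hf z hz).mono ball_subset_closedBall).norm continuousWithinAt_const ha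

variable {E : Type*} [NormedAddCommGroup E] [NormedSpace ℂ E]

theorem norm_le_of_three_circles {f : ℂ → E} {r₁ r₂ a b : ℝ} (hr₁ : 0 < r₁) (hr₁₂ : r₁ < r₂)
    (hf : DifferentiableOn ℂ f (closedBall 0 r₂ \ ball 0 r₁))
    (ha : ∀ z ∈ sphere (0 : ℂ) r₁, ‖f z‖ ≤ a) (hb : ∀ z ∈ sphere (0 : ℂ) r₂, ‖f z‖ ≤ b)
    {z : ℂ} (hz₁ : r₁ ≤ ‖z‖) (hz₂ : ‖z‖ ≤ r₂) :
    ‖f z‖ ≤ a ^ (1 - Real.log (‖z‖ / r₁) / Real.log (r₂ / r₁)) *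
      b ^ (Real.log (‖z‖ / r₁) / Real.log (r₂ / r₁)) := by
  set u := Real.log (r₂ / r₁)
  have hu : 0 < u := Real.log_pos ((one_lt_div hr₁).2 hr₁₂)
  have hexp_u : r₁ * Real.exp u = r₂ := by
    rw [Real.exp_log (div_pos (hr₁.trans hr₁₂) hr₁)]; field_simp
  set φ : ℂ → ℂ := fun w => r₁ * Complex.exp w
  have norm_φ (w : ℂ) : ‖φ w‖ = r₁ * Real.exp w.re := by
    simp [φ, Complex.norm_exp, abs_of_pos hr₁]
  have hφ : Set.MapsTo φ (verticalClosedStrip 0 u) (closedBall 0 r₂ \ ball 0 r₁) := by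
    intro w ⟨hw₀, hwu⟩
    simp only [Set.mem_sdiff, mem_closedBall_zero_iff, mem_ball_zero_iff, norm_φ, not_lt]
    constructor
    · rw [← hexp_u]; gcongr
    · exact le_mul_of_one_le_right hr₁.le (Real.one_le_exp hw₀)
  have hcl : closure (verticalStrip 0 u) = verticalClosedStrip 0 u := by
    rw [verticalStrip, Complex.closure_preimage_re, closure_Ioo hu.ne]; rfl
  have hd : DiffContOnCl ℂ (f ∘ φ) (verticalStrip 0 u) :=
    (hcl ▸ hf.comp (by fun_prop) hφ).diffContOnCl
  have hbdd : BddAbove ((norm ∘ (f ∘ φ)) '' verticalClosedStrip 0 u) := by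
    have hK : IsCompact (closedBall (0 : ℂ) r₂ \ ball 0 r₁) :=
      (isCompact_closedBall _ _).diff isOpen_ball
    refine (hK.bddAbove_image (continuous_norm.comp_continuousOn hf.continuousOn)).mono ?_
    rintro _ ⟨w, hw, rfl⟩
    exact ⟨φ w, hφ hw, rfl⟩
  have hz : z ≠ 0 := by rintro rfl; simp at hz₁; linarith
  set w₀ := Complex.log (z / r₁)
  have hφw₀ : φ w₀ = z := by
    simp only [φ, w₀]
    rw [Complex.exp_log (div_ne_zero hz (by exact_mod_cast hr₁.ne'))]
    exact mul_div_cancel₀ z (by exact_mod_cast hr₁.ne')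
  have hw₀ : w₀.re = Real.log (‖z‖ / r₁) := by
    simp [w₀, Complex.log_re, abs_of_pos hr₁]
  have hw₀_mem : w₀ ∈ verticalClosedStrip 0 u := by
    rw [verticalClosedStrip, Set.mem_preimage, hw₀]
    exact ⟨Real.log_nonneg ((one_le_div hr₁).2 hz₁),
      Real.log_le_log (div_pos (hr₁.trans_le hz₁) hr₁) (by gcongr)⟩
  have hinterp := norm_le_interp_of_mem_verticalClosedStrip' (a := a) (b := b) hu hw₀_mem hd hbdd
    (fun w (hw : w.re = 0) ↦ ha _ (by rw [mem_sphere_zero_iff_norm, norm_φ, hw, Real.exp_zero,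
      mul_one]))
    (fun w (hw : w.re = u) ↦ hb _ (by rw [mem_sphere_zero_iff_norm, norm_φ, hw, hexp_u]))
  rwa [Function.comp_apply, hφw₀, hw₀, sub_zero, sub_zero] at hinterp

theorem norm_le_of_three_circles_ball {f : ℂ → E} {r₁ R a b : ℝ} (hr₁ : 0 < r₁) (hr₁R : r₁ < R)
    (ha₀ : 0 < a) (hb₀ : 0 < b) (hf : DifferentiableOn ℂ f (ball 0 R))
    (ha : ∀ z ∈ sphere (0 : ℂ) r₁, ‖f z‖ ≤ a) (hb : ∀ z ∈ ball (0 : ℂ) R, ‖f z‖ ≤ b)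
    {z : ℂ} (hz₁ : r₁ ≤ ‖z‖) (hzR : ‖z‖ < R) :
    ‖f z‖ ≤ a ^ (1 - Real.log (‖z‖ / r₁) / Real.log (R / r₁)) *
      b ^ (Real.log (‖z‖ / r₁) / Real.log (R / r₁)) := by
  set bound : ℝ → ℝ := fun r ↦ a ^ (1 - Real.log (‖z‖ / r₁) / Real.log (r / r₁)) *
      b ^ (Real.log (‖z‖ / r₁) / Real.log (r / r₁))
  have hlog : Real.log (R / r₁) ≠ 0 := (Real.log_pos ((one_lt_div hr₁).2 hr₁R)).ne'
  have hcont : ContinuousAt bound R := by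
    have : ContinuousAt (fun r ↦ Real.log (‖z‖ / r₁) / Real.log (r / r₁)) R :=
      continuousAt_const.div ((continuousAt_id.div_const r₁).log
        (div_pos (hr₁.trans hr₁R) hr₁).ne') hlog
    exact ((Real.continuousAt_const_rpow ha₀.ne').comp (continuousAt_const.sub this)).mul
      ((Real.continuousAt_const_rpow hb₀.ne').comp this)
  refine ge_of_tendsto (hcont.tendsto.mono_left (nhdsWithin_le_nhds (s := Set.Iio R))) ?_
  filter_upwards [Ioo_mem_nhdsLT hzR] with r hr
  exact norm_le_of_three_circles hr₁ (hz₁.trans_lt hr.1)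
    (hf.mono (Set.sdiff_subset.trans (closedBall_subset_ball hr.2)))
    ha (fun w hw ↦ hb w (closedBall_subset_ball hr.2 (sphere_subset_closedBall hw))) hz₁ hr.1.le

/-- Two-constants theorem: if `g` is holomorphic on the unit disc with `|g| < 1` and
`|g| < η` on the disc of radius `1/4` (`0 < η < 1`), then `|g| ≤ √η` on the disc of
radius `1/2`. -/
theorem stmt_1 (g : ℂ → ℂ) (η : ℝ) (hη0 : 0 < η) (hη1 : η < 1)
    (hg : DifferentiableOn ℂ g (ball (0 : ℂ) 1))
    (hb : ∀ z ∈ ball (0 : ℂ) 1, ‖g z‖ < 1)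
    (hs : ∀ z : ℂ, ‖z‖ < 1 / 4 → ‖g z‖ < η) :
    ∀ z : ℂ, ‖z‖ ≤ 1 / 2 → ‖g z‖ ≤ Real.sqrt η := by
  intro z hz
  rcases lt_or_ge ‖z‖ (1 / 4) with hz₁ | hz₁
  · exact (hs z hz₁).le.trans (Real.le_sqrt_self_iff.2 hη1.le)
  have hg_sphere (w : ℂ) (hw : w ∈ sphere (0 : ℂ) (1 / 4)) : ‖g w‖ ≤ η :=
    (hg.continuousOn.mono (closedBall_subset_ball (by norm_num))).norm_le_of_forall_mem_ball
      (by norm_num) (fun y hy ↦ (hs y (mem_ball_zero_iff.1 hy)).le) (sphere_subset_closedBall hw)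
  have hinterp := norm_le_of_three_circles_ball (by norm_num) (by norm_num) hη0 one_pos hg hg_sphere
    (fun w hw ↦ (hb w hw).le) hz₁ (hz.trans_lt (by norm_num))
  rw [Real.one_rpow, mul_one] at hinterp
  refine hinterp.trans ?_
  rw [Real.sqrt_eq_rpow]
  refine Real.rpow_le_rpow_of_exponent_ge hη0 hη1.le ?_
  have hlog4 : Real.log (1 / (1 / 4)) = 2 * Real.log 2 := by
    rw [← Real.log_rpow two_pos]; norm_num
  have hlogz : Real.log (‖z‖ / (1 / 4)) ≤ Real.log 2 :=
    Real.log_le_log (by positivity) (by linarith)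
  have hratio : Real.log (‖z‖ / (1 / 4)) / Real.log (1 / (1 / 4)) ≤ 1 / 2 := by
    rw [hlog4, div_le_iff₀ (by positivity)]; linarith
  linarith
end

section
/- Let v be an upper semicontinuous function on a complex manifold M that locally is a decreasing limit of C² functions v_n with (−1)^k (i∂∂̄ v_n)^k ≤ ε_n ω^k, ε_n → 0 (i.e. v ∈ P⁽ᵏ⁾₋(M)). Then v satisfies the local maximum principle: for every closed ball B ⊂ M, max over B of v equals max over ∂B of v. -/
open Filter Metric

/-- The Laplacian of a function on `ℂ ≅ ℝ²`. -/
noncomputable def lapl (f : ℂ → ℝ) (z : ℂ) : ℝ :=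
  fderiv ℝ (fun w => fderiv ℝ f w 1) z 1 +
    fderiv ℝ (fun w => fderiv ℝ f w Complex.I) z Complex.I

/-!
At an interior maximum of a `C²` function every second directional derivative is `≤ 0`, so
a function with positive Laplacian on a ball attains its maximum over the closed ball on the
sphere. Applied to `vₙ + c‖z - z₀‖²` with `4c > εₙ`, and letting `c ↓ εₙ / 4`, this gives
`vₙ z ≤ sup_{∂B} vₙ + εₙ (r² - ‖z - z₀‖²) / 4` on `B`. Since the `vₙ` decrease to `v`,
compactness of the sphere (Dini's argument) gives `sup_{∂B} vₙ < sup_{∂B} v + η` for large `n`,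
while `v ≤ vₙ`; letting `n → ∞` bounds `v` on `B` by its supremum on `∂B`.
-/

open Set Topology

theorem IsLocalMax.deriv_deriv_nonpos {g : ℝ → ℝ} {t : ℝ} (hmax : IsLocalMax g t)
    (hg : ContinuousAt g t) : deriv (deriv g) t ≤ 0 := by
  by_contra! hpos
  have hmin := isLocalMin_of_deriv_deriv_pos hpos hmax.deriv_eq_zero hg
  have hconst : g =ᶠ[𝓝 t] fun _ => g t :=
    (hmax.and hmin).mono fun _ hs => le_antisymm hs.1 hs.2
  have hderiv : deriv g =ᶠ[𝓝 t] fun _ => 0 :=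
    hconst.eventuallyEq_nhds.mono fun _ hs => hs.deriv_eq.trans (deriv_const _ _)
  simp [hderiv.deriv_eq] at hpos

section

variable {E : Type*} [NormedAddCommGroup E]

theorem IsLocalMax.fderiv_fderiv_apply_self_nonpos [NormedSpace ℝ E] {f : E → ℝ} {x : E}
    (hmax : IsLocalMax f x) (hf : Differentiable ℝ f) {e : E}
    (hfe : DifferentiableAt ℝ (fun w => fderiv ℝ f w e) x) :
    fderiv ℝ (fun w => fderiv ℝ f w e) x e ≤ 0 := by
  set L : ℝ → E := fun t => x + t • e
  have hL0 : L 0 = x := by simp [L]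
  have hL : ∀ t, HasDerivAt L e t := fun t => by
    simpa only [one_smul, id] using ((hasDerivAt_id t).smul_const e).const_add x
  have hderiv : deriv (f ∘ L) = fun t => fderiv ℝ f (L t) e :=
    funext fun t => ((hf _).hasFDerivAt.comp_hasDerivAt t (hL t)).deriv
  have hderiv2 : deriv (deriv (f ∘ L)) 0 = fderiv ℝ (fun w => fderiv ℝ f w e) x e := by
    rw [hderiv, ← hL0]
    exact ((hL0 ▸ hfe).hasFDerivAt.comp_hasDerivAt 0 (hL 0)).deriv
  have hmaxL : IsLocalMax (f ∘ L) 0 := (hL0 ▸ hmax).comp_continuous (hL 0).continuousAt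
  rw [← hderiv2]
  exact hmaxL.deriv_deriv_nonpos ((hf _).continuousAt.comp (hL 0).continuousAt)

theorem ContDiff.differentiable_fderiv_apply {F : Type*} [NormedAddCommGroup F] [NormedSpace ℝ E]
    [NormedSpace ℝ F] {f : E → F} (hf : ContDiff ℝ 2 f) (e : E) :
    Differentiable ℝ fun w => fderiv ℝ f w e :=
  ((hf.fderiv_right (m := 1) (by norm_num)).clm_apply contDiff_const).differentiable one_ne_zero

theorem fderiv_fderiv_apply_const_mul_norm_sub_sq [InnerProductSpace ℝ E] (c : ℝ) (z₀ x e : E) :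
    fderiv ℝ (fun w => fderiv ℝ (fun y => c * ‖y - z₀‖ ^ 2) w e) x e = 2 * c * ‖e‖ ^ 2 := by
  have h1 : (fun w => fderiv ℝ (fun y => c * ‖y - z₀‖ ^ 2) w e)
      = fun w => 2 * c * inner ℝ e (w - z₀) := by
    funext w
    have h := ((hasFDerivAt_id w).sub_const z₀).norm_sq.const_mul c
    simp only [id] at h
    rw [h.fderiv]
    simp only [map_sub, ContinuousLinearMap.comp_id, smul_apply, sub_apply, coe_innerSL_apply,
      real_inner_comm e, nsmul_eq_mul, Nat.cast_ofNat, smul_eq_mul, inner_sub_right]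
    ring
  have h2 : HasFDerivAt (fun w => 2 * c * inner ℝ e (w - z₀))
      ((2 * c) • (innerSL ℝ e).comp (ContinuousLinearMap.id ℝ E)) x :=
    ((innerSL ℝ e).hasFDerivAt.comp x ((hasFDerivAt_id x).sub_const z₀)).const_mul (2 * c)
  rw [h1, h2.fderiv]
  simp

theorem contDiff_const_mul_norm_sub_sq [InnerProductSpace ℝ E] {n : WithTop ℕ∞} (c : ℝ) (z₀ : E) :
    ContDiff ℝ n fun w => c * ‖w - z₀‖ ^ 2 :=
  contDiff_const.mul ((contDiff_norm_sq ℝ).comp (contDiff_id.sub contDiff_const))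

end

theorem lapl_nonpos_of_isLocalMax {f : ℂ → ℝ} {z : ℂ} (hf : ContDiff ℝ 2 f)
    (hmax : IsLocalMax f z) : lapl f z ≤ 0 :=
  have hfd := hf.differentiable (by norm_num)
  add_nonpos
    (hmax.fderiv_fderiv_apply_self_nonpos hfd (hf.differentiable_fderiv_apply _ _))
    (hmax.fderiv_fderiv_apply_self_nonpos hfd (hf.differentiable_fderiv_apply _ _))

theorem lapl_add {f g : ℂ → ℝ} (hf : ContDiff ℝ 2 f) (hg : ContDiff ℝ 2 g) (z : ℂ) :
    lapl (f + g) z = lapl f z + lapl g z := by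
  have key : ∀ e : ℂ, fderiv ℝ (fun w => fderiv ℝ (f + g) w e) z e
      = fderiv ℝ (fun w => fderiv ℝ f w e) z e + fderiv ℝ (fun w => fderiv ℝ g w e) z e := by
    intro e
    have hfd := hf.differentiable (by norm_num)
    have hgd := hg.differentiable (by norm_num)
    simp only [fderiv_add (hfd _) (hgd _), add_apply]
    rw [fderiv_fun_add (hf.differentiable_fderiv_apply e z) (hg.differentiable_fderiv_apply e z)]
    rfl
  simp only [lapl, key]
  ring

theorem lapl_const_mul_norm_sub_sq (c : ℝ) (z₀ z : ℂ) :
    lapl (fun w => c * ‖w - z₀‖ ^ 2) z = 4 * c := by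
  simp only [lapl, fderiv_fderiv_apply_const_mul_norm_sub_sq]
  simp only [norm_one, one_pow, mul_one, Complex.norm_I]
  ring

theorem exists_mem_sphere_isMaxOn_closedBall_of_lapl_pos {g : ℂ → ℝ} (hg : ContDiff ℝ 2 g)
    {z₀ : ℂ} {r : ℝ} (hr : 0 ≤ r) (hl : ∀ z ∈ ball z₀ r, 0 < lapl g z) :
    ∃ x ∈ sphere z₀ r, IsMaxOn g (closedBall z₀ r) x := by
  obtain ⟨x, hx, hmax⟩ := (isCompact_closedBall z₀ r).exists_isMaxOn
    (nonempty_closedBall.2 hr) hg.continuous.continuousOn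
  refine ⟨x, ?_, hmax⟩
  by_contra hxs
  have hxball : x ∈ ball z₀ r := by
    rw [← closedBall_sdiff_sphere]
    exact ⟨hx, hxs⟩
  have hloc : IsLocalMax g x :=
    hmax.isLocalMax (mem_of_superset (isOpen_ball.mem_nhds hxball) ball_subset_closedBall)
  exact (lapl_nonpos_of_isLocalMax hg hloc).not_gt (hl x hxball)

theorem le_sSup_sphere_add_of_neg_le_lapl {f : ℂ → ℝ} (hf : ContDiff ℝ 2 f) {a : ℝ} {z₀ : ℂ}
    {r : ℝ} (hl : ∀ z ∈ ball z₀ r, -a ≤ lapl f z) {z : ℂ} (hz : z ∈ closedBall z₀ r) :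
    f z ≤ sSup (f '' sphere z₀ r) + a / 4 * (r ^ 2 - ‖z - z₀‖ ^ 2) := by
  have hr : 0 ≤ r := dist_nonneg.trans hz
  have hbdd : BddAbove (f '' sphere z₀ r) :=
    (isCompact_sphere z₀ r).bddAbove_image hf.continuous.continuousOn
  have hpert : ∀ c > a / 4, f z ≤ sSup (f '' sphere z₀ r) + c * (r ^ 2 - ‖z - z₀‖ ^ 2) := by
    intro c hc
    have hg : ContDiff ℝ 2 (f + fun w => c * ‖w - z₀‖ ^ 2) :=
      hf.add (contDiff_const_mul_norm_sub_sq c z₀)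
    obtain ⟨x, hx, hmax⟩ := exists_mem_sphere_isMaxOn_closedBall_of_lapl_pos hg hr fun w hw => by
      rw [lapl_add hf (contDiff_const_mul_norm_sub_sq c z₀), lapl_const_mul_norm_sub_sq]
      linarith [hl w hw]
    have hxr : ‖x - z₀‖ = r := mem_sphere_iff_norm.1 hx
    have hzx : f z + c * ‖z - z₀‖ ^ 2 ≤ f x + c * r ^ 2 := by simpa [hxr] using hmax hz
    linarith [le_csSup hbdd (mem_image_of_mem f hx)]
  have hlim : Tendsto (fun c => sSup (f '' sphere z₀ r) + c * (r ^ 2 - ‖z - z₀‖ ^ 2))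
      (𝓝[>] (a / 4)) (𝓝 (sSup (f '' sphere z₀ r) + a / 4 * (r ^ 2 - ‖z - z₀‖ ^ 2))) :=
    ((continuous_const.add (continuous_id.mul continuous_const)).tendsto _).mono_left
      nhdsWithin_le_nhds
  exact ge_of_tendsto hlim (eventually_nhdsWithin_of_forall hpert)

theorem csSup_image_eq_of_subset_of_forall_le {X α : Type*} [ConditionallyCompleteLattice α]
    {f : X → α} {s t : Set X} (hst : s ⊆ t) (hs : s.Nonempty)
    (h : ∀ x ∈ t, f x ≤ sSup (f '' s)) : sSup (f '' t) = sSup (f '' s) :=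
  le_antisymm (csSup_le ((hs.mono hst).image f) (forall_mem_image.2 h))
    (csSup_le_csSup ⟨_, forall_mem_image.2 h⟩ (hs.image f) (image_mono hst))

theorem IsCompact.exists_forall_lt_of_antitone_of_tendsto {X α : Type*} [TopologicalSpace X]
    [LinearOrder α] [TopologicalSpace α] [OrderTopology α] {K : Set X} (hK : IsCompact K)
    {u : ℕ → X → α} {v : X → α} {b : α} (hu : ∀ n, UpperSemicontinuous (u n))
    (hanti : Antitone u) (hlim : ∀ x ∈ K, Tendsto (u · x) atTop (𝓝 (v x)))
    (hb : ∀ x ∈ K, v x < b) : ∃ N, ∀ x ∈ K, u N x < b :=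
  hK.elim_directed_cover (fun n => u n ⁻¹' Iio b) (fun n => (hu n).isOpen_preimage b)
    (fun x hx => mem_iUnion.2 ((hlim x hx).eventually (gt_mem_nhds (hb x hx))).exists)
    (Monotone.directed_le fun _ _ hmn x hx => (hanti hmn x).trans_lt hx)

theorem le_sSup_sphere_of_antitone_of_tendsto {v : ℂ → ℝ} {vn : ℕ → ℂ → ℝ}
    (hC2 : ∀ n, ContDiff ℝ 2 (vn n)) (hanti : Antitone vn)
    (hlim : ∀ z, Tendsto (fun n => vn n z) atTop (𝓝 (v z))) {ε : ℕ → ℝ}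
    (hε0 : Tendsto ε atTop (𝓝 0)) {z₀ : ℂ} {r : ℝ}
    (hsub : ∀ n, ∀ z ∈ ball z₀ r, -(ε n) ≤ lapl (vn n) z) {z : ℂ} (hz : z ∈ closedBall z₀ r) :
    v z ≤ sSup (v '' sphere z₀ r) := by
  set S := sSup (v '' sphere z₀ r)
  have hvle : ∀ n y, v y ≤ vn n y := fun n y =>
    Antitone.le_of_tendsto (fun _ _ h => hanti h y) (hlim y) n
  have hsphere : (sphere z₀ r).Nonempty := NormedSpace.sphere_nonempty.2 (dist_nonneg.trans hz)
  have hbdd : BddAbove (v '' sphere z₀ r) :=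
    ((isCompact_sphere z₀ r).bddAbove_image (hC2 0).continuous.continuousOn).imp fun _ hC =>
      forall_mem_image.2 fun y hy => (hvle 0 y).trans (hC (mem_image_of_mem _ hy))
  refine le_of_forall_pos_le_add fun η hη => ?_
  obtain ⟨N, hN⟩ := (isCompact_sphere z₀ r).exists_forall_lt_of_antitone_of_tendsto
    (b := S + η / 2) (fun n => (hC2 n).continuous.upperSemicontinuous) hanti (fun y _ => hlim y)
    fun y hy => (le_csSup hbdd (mem_image_of_mem v hy)).trans_lt (by linarith)
  have hsmall : Tendsto (fun n => ε n / 4 * (r ^ 2 - ‖z - z₀‖ ^ 2)) atTop (𝓝 0) := by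
    simpa using (hε0.div_const 4).mul_const (r ^ 2 - ‖z - z₀‖ ^ 2)
  obtain ⟨m, hNm, hm⟩ :=
    ((eventually_ge_atTop N).and (hsmall.eventually (ge_mem_nhds (half_pos hη)))).exists
  have hvnm : sSup (vn m '' sphere z₀ r) ≤ S + η / 2 :=
    csSup_le (hsphere.image _) (forall_mem_image.2 fun y hy => (hanti hNm y).trans (hN y hy).le)
  calc v z ≤ vn m z := hvle m z
    _ ≤ sSup (vn m '' sphere z₀ r) + ε m / 4 * (r ^ 2 - ‖z - z₀‖ ^ 2) :=
      le_sSup_sphere_add_of_neg_le_lapl (hC2 m) (hsub m) hz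
    _ ≤ S + η / 2 + η / 2 := add_le_add hvnm hm
    _ = S + η := by ring

theorem stmt_9_general (v : ℂ → ℝ)
    (vn : ℕ → ℂ → ℝ) (hC2 : ∀ n, ContDiff ℝ 2 (vn n))
    (hmono : ∀ z, Antitone fun n => vn n z)
    (hlim : ∀ z, Tendsto (fun n => vn n z) atTop (nhds (v z)))
    (ε : ℕ → ℝ)
    (hε0 : Tendsto ε atTop (nhds 0))
    (hsub : ∀ n z, -(ε n) ≤ lapl (vn n) z) :
    ∀ (z₀ : ℂ) (r : ℝ), 0 < r →
      sSup (v '' closedBall z₀ r) = sSup (v '' sphere z₀ r) := fun _ _ hr =>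
  csSup_image_eq_of_subset_of_forall_le sphere_subset_closedBall
    (NormedSpace.sphere_nonempty.2 hr.le) fun _ hz =>
      le_sSup_sphere_of_antitone_of_tendsto hC2 (fun _ _ h z => hmono z h) hlim hε0
        (fun n z _ => hsub n z) hz

/-- Proposition 6.10 (case `k = 1`, on `ℂ`): an upper semicontinuous function `v` which
is a decreasing pointwise limit of `C²` functions `vₙ` with `Δvₙ ≥ −εₙ`, `εₙ → 0`
(i.e. `v ∈ P⁽¹⁾₋`), satisfies the local maximum principle: on every closed ball, the
supremum of `v` equals its supremum on the boundary sphere. -/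
theorem stmt_9 (v : ℂ → ℝ) (hv : UpperSemicontinuous v)
    (vn : ℕ → ℂ → ℝ) (hC2 : ∀ n, ContDiff ℝ 2 (vn n))
    (hmono : ∀ z, Antitone fun n => vn n z)
    (hlim : ∀ z, Tendsto (fun n => vn n z) atTop (nhds (v z)))
    (ε : ℕ → ℝ) (hεpos : ∀ n, 0 ≤ ε n)
    (hε0 : Tendsto ε atTop (nhds 0))
    (hsub : ∀ n z, -(ε n) ≤ lapl (vn n) z) :
    ∀ (z₀ : ℂ) (r : ℝ), 0 < r →
      sSup (v '' closedBall z₀ r) = sSup (v '' sphere z₀ r) :=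
  stmt_9_general v vn hC2 hmono hlim ε hε0 hsub
end

section
/- Lemma 3.6: Let δ, C > 0 with the two-sided estimate |α−β|²/C ≤ |f_α(z) − f_β(z)| ≤ C|α−β|^{1/2} for all |z| ≤ δ, where f_α are local leaf graphs with f_α(0) = α. Then for ε₀ sufficiently small (depending only on δ, C), for all 0 < |ε| ≤ ε₀ and all leaves f₁, f₂: sup over |z| ≤ δ of |f₁(z) + εz − f₂(z)| ≥ |ε|³. -/
/-- Lemma 3.6: under the two-sided transverse estimate
`‖f₁ 0 − f₂ 0‖²/C ≤ ‖f₁ z − f₂ z‖ ≤ C ‖f₁ 0 − f₂ 0‖^{1/2}` for `‖z‖ ≤ δ`, there is an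
`ε₀ > 0` (depending only on `δ, C`) such that for `0 < ‖ε‖ ≤ ε₀` the sheared leaf
satisfies `sup_{‖z‖ ≤ δ} ‖f₁ z + ε z − f₂ z‖ ≥ ‖ε‖³`. -/
theorem stmt_14 (δ C : ℝ) (hδ : 0 < δ) (hC : 1 ≤ C) :
    ∃ ε₀ > (0 : ℝ), ∀ ε : ℂ, 0 < ‖ε‖ → ‖ε‖ ≤ ε₀ →
      ∀ f₁ f₂ : ℂ → ℂ,
        (∀ z : ℂ, ‖z‖ ≤ δ →
          ‖f₁ 0 - f₂ 0‖ ^ (2 : ℝ) / C ≤ ‖f₁ z - f₂ z‖ ∧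
            ‖f₁ z - f₂ z‖ ≤ C * ‖f₁ 0 - f₂ 0‖ ^ ((1 : ℝ) / 2)) →
        ∃ z : ℂ, ‖z‖ ≤ δ ∧ ‖ε‖ ^ 3 ≤ ‖f₁ z + ε * z - f₂ z‖ := by
  have hC0 : (0 : ℝ) < C := lt_of_lt_of_le one_pos hC
  refine ⟨min ((δ / (2 * C)) ^ 2) (Real.sqrt (δ / 2)), ?_, ?_⟩
  · have : 0 < Real.sqrt (δ / 2) := Real.sqrt_pos.2 (by linarith)
    have : 0 < (δ / (2 * C)) ^ 2 := by positivity
    positivity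
  intro ε hε hεle f₁ f₂ hf
  set e := ‖ε‖ with he
  have he0 : 0 ≤ e := norm_nonneg ε
  by_cases h0 : e ^ 3 ≤ ‖f₁ 0 - f₂ 0‖
  · exact ⟨0, by simpa using hδ.le, by simpa using h0⟩
  push_neg at h0
  have hδn : ‖(δ : ℂ)‖ = δ := by
    simp [Complex.norm_real, abs_of_pos hδ]
  obtain ⟨-, hub⟩ := hf δ (le_of_eq hδn)
  -- upper bound: ‖f₁ δ - f₂ δ‖ ≤ C * e * sqrt e
  have hmono : ‖f₁ 0 - f₂ 0‖ ^ ((1:ℝ)/2) ≤ (e ^ 3) ^ ((1:ℝ)/2) :=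
    Real.rpow_le_rpow (norm_nonneg _) h0.le (by norm_num)
  have hsq : (e ^ 3 : ℝ) ^ ((1:ℝ)/2) = e * Real.sqrt e := by
    rw [← Real.sqrt_eq_rpow]
    have : (e ^ 3 : ℝ) = e ^ 2 * e := by ring
    rw [this, Real.sqrt_mul (by positivity), Real.sqrt_sq he0]
  have hub2 : ‖f₁ δ - f₂ δ‖ ≤ C * (e * Real.sqrt e) := by
    calc ‖f₁ δ - f₂ δ‖ ≤ C * ‖f₁ 0 - f₂ 0‖ ^ ((1:ℝ)/2) := hub
      _ ≤ C * (e * Real.sqrt e) := by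
          rw [← hsq]; exact mul_le_mul_of_nonneg_left hmono hC0.le
  -- bounds from ε₀
  have hs : Real.sqrt e ≤ δ / (2 * C) := by
    have h1 : e ≤ (δ / (2 * C)) ^ 2 := le_trans hεle (min_le_left _ _)
    calc Real.sqrt e ≤ Real.sqrt ((δ / (2 * C)) ^ 2) := Real.sqrt_le_sqrt h1
      _ = δ / (2 * C) := Real.sqrt_sq (by positivity)
  have hCs : C * Real.sqrt e ≤ δ / 2 := by
    have := mul_le_mul_of_nonneg_left hs hC0.le
    calc C * Real.sqrt e ≤ C * (δ / (2 * C)) := this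
      _ = δ / 2 := by field_simp
  have he2 : e ^ 2 ≤ δ / 2 := by
    have h1 : e ≤ Real.sqrt (δ / 2) := le_trans hεle (min_le_right _ _)
    calc e ^ 2 ≤ Real.sqrt (δ / 2) ^ 2 := by
            exact pow_le_pow_left₀ he0 h1 2
      _ = δ / 2 := Real.sq_sqrt (by linarith)
  -- conclude at z = δ
  refine ⟨(δ : ℂ), le_of_eq hδn, ?_⟩
  have htri : e * δ - ‖f₁ δ - f₂ δ‖ ≤ ‖f₁ δ + ε * δ - f₂ δ‖ := by
    have h2 : ε * (δ:ℂ) = (f₁ δ + ε * δ - f₂ δ) - (f₁ δ - f₂ δ) := by ring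
    have h3 : ‖ε * (δ:ℂ)‖ = e * δ := by rw [norm_mul, hδn]
    have := norm_sub_le (f₁ δ + ε * δ - f₂ δ) (f₁ δ - f₂ δ)
    rw [← h2, h3] at this
    linarith
  have hnum : e ^ 3 ≤ e * δ - C * (e * Real.sqrt e) := by
    have : e * (e ^ 2 + C * Real.sqrt e) ≤ e * δ := by
      apply mul_le_mul_of_nonneg_left _ he0
      linarith
    nlinarith
  linarith [hub2, htri]
end
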